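/- Let 0 < ε ≤ 1/2, let X ⊆ ℝ^d be finite and (k,ε)-irreducible with optimal k-means partition X₁,…,X_k, let 1 ≤ i < k, and let C_i be a set of i centers satisfying the invariant P(i). Then for every j ∈ {i+1,…,k}: (1) Φ(C_i, Y_j) ≥ (ε/128)·Φ(C_i, X_j), and (2) for every y ∈ Y_j and every x ∈ X_j, (ε/128)·Φ(C_i,{y}) ≤ Φ(C_i,{x}). -/

import Mathlib

open Finset
open scoped BigOperators
open Classical

noncomputable section

/-- Points of `ℝ^d`. -/
abbrev Pt (d : ℕ) := EuclideanSpace ℝ (Fin d)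

/-- `Φ(C, X) = Σ_{x ∈ X} min_{c ∈ C} ‖x - c‖²`. -/
noncomputable def Phi {d : ℕ} (C X : Finset (Pt d)) : ℝ :=
  ∑ x ∈ X, sInf ((fun c => ‖x - c‖ ^ 2) '' (C : Set (Pt d)))

/-- The centroid `μ(X)` of a finite set of points. -/
noncomputable def ctr {d : ℕ} (X : Finset (Pt d)) : Pt d :=
  (X.card : ℝ)⁻¹ • ∑ x ∈ X, x

/-- `Δ₁(X) = Φ({μ(X)}, X)`. -/
noncomputable def Delta1 {d : ℕ} (X : Finset (Pt d)) : ℝ := Phi {ctr X} X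

/-- `Δ_k(X)`: the optimal `k`-means cost of `X`. -/
noncomputable def DeltaK {d : ℕ} (k : ℕ) (X : Finset (Pt d)) : ℝ :=
  sInf ((fun C => Phi C X) '' {C : Finset (Pt d) | C.card = k})

/-- `X₁, …, X_k` is an optimal `k`-means partition of `X`. -/
def IsOptPartition {d : ℕ} (k : ℕ) (X : Finset (Pt d)) (Xs : Fin k → Finset (Pt d)) : Prop :=
  (∀ j, (Xs j).Nonempty) ∧
  (∀ j l, j ≠ l → Disjoint (Xs j) (Xs l)) ∧
  Finset.univ.biUnion Xs = X ∧
  ∑ j, Delta1 (Xs j) = DeltaK k X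

/-- `X` is `(k, ε)`-irreducible: `Δ_{k-1}(X) ≥ (1+ε)·Δ_k(X)`. -/
def KIrreducible {d : ℕ} (k : ℕ) (ε : ℝ) (X : Finset (Pt d)) : Prop :=
  (1 + ε) * DeltaK k X ≤ DeltaK (k - 1) X

/-- The invariant `P(i)`: `Ci` consists of the centers `c r` for `r < i` (clusters reindexed
so that the covered clusters come first), each `c r` is a `(1 + ε/16)`-good center for the
optimal cluster `Xs r`, and `Φ(Ci, X) > 0`. -/
def InvariantP {d k : ℕ} (ε : ℝ) (X : Finset (Pt d)) (Xs : Fin k → Finset (Pt d))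
    (i : ℕ) (c : Fin k → Pt d) (Ci : Finset (Pt d)) : Prop :=
  Ci = Finset.image c (Finset.univ.filter (fun r : Fin k => r.val < i)) ∧
  (∀ r : Fin k, r.val < i → Phi {c r} (Xs r) ≤ (1 + ε / 16) * Delta1 (Xs r)) ∧
  0 < Phi Ci X

/-!
Let `C = {c r : r ∈ T}` with `T` the covered clusters, and let `x ∈ X_j` have nearest center `c_r`.
Merging `X_r` into `X_j` leaves `k - 1` centers, so irreducibility gives
`m_r ‖μ_j - μ_r‖² ≥ ε Δ_k`, whereas the good center satisfies `m_r ‖c_r - μ_r‖² ≤ (ε/16) Δ_k`;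
together with optimality of the partition (`x` is no closer to `μ_r` than to `μ_j`) the triangle
inequality yields `‖μ_j - c_r‖ ≤ 3 ‖x - c_r‖`. Replacing every uncovered cluster other than `X_j`
by its centroid also leaves `k - 1` centers, so `m_j Φ(C, {μ_j}) ≥ (15ε/16) Δ_k`. Since
`Φ(C, X_j) ≤ Δ₁(X_j) + m_j Φ(C, {μ_j})`, this gives `(ε/64) Φ(C, X_j) ≤ m_j Φ(C, {x})` for every
`x ∈ X_j`, and both claims follow from a Markov count: at least half of `X_j` lies in `Y_j`.
-/

section Phi

variable {d : ℕ} {C C' S X : Finset (Pt d)} {c x : Pt d}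

lemma Phi_eq_sum_Phi_singleton (C X : Finset (Pt d)) : Phi C X = ∑ x ∈ X, Phi C {x} := by
  simp only [Phi, sum_singleton]

lemma Phi_singleton_nonneg (C : Finset (Pt d)) (x : Pt d) : 0 ≤ Phi C {x} := by
  rw [Phi, sum_singleton]
  exact Real.sInf_nonneg (by rintro _ ⟨c, -, rfl⟩; positivity)

lemma Phi_nonneg (C X : Finset (Pt d)) : 0 ≤ Phi C X := by
  rw [Phi_eq_sum_Phi_singleton]
  exact sum_nonneg fun x _ => Phi_singleton_nonneg C x

lemma Delta1_nonneg (S : Finset (Pt d)) : 0 ≤ Delta1 S := Phi_nonneg _ _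

lemma Phi_singleton_le (hc : c ∈ C) : Phi C {x} ≤ ‖x - c‖ ^ 2 := by
  rw [Phi, sum_singleton]
  exact csInf_le ⟨0, by rintro _ ⟨c, -, rfl⟩; positivity⟩ ⟨c, hc, rfl⟩

lemma exists_Phi_singleton_eq (hC : C.Nonempty) (x : Pt d) :
    ∃ c ∈ C, Phi C {x} = ‖x - c‖ ^ 2 := by
  obtain ⟨c, hc, hmin⟩ := C.exists_min_image (fun c => ‖x - c‖ ^ 2) hC
  refine ⟨c, hc, le_antisymm (Phi_singleton_le hc) ?_⟩
  rw [Phi, sum_singleton]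
  exact le_csInf (hC.to_set.image _) (by rintro _ ⟨c', hc', rfl⟩; exact hmin c' hc')

lemma nonempty_of_Phi_pos (h : 0 < Phi C X) : C.Nonempty := by
  rw [nonempty_iff_ne_empty]
  rintro rfl
  simp [Phi] at h

lemma Phi_singleton_left (c : Pt d) (X : Finset (Pt d)) :
    Phi {c} X = ∑ x ∈ X, ‖x - c‖ ^ 2 := by
  simp [Phi, Set.image_singleton]

lemma Phi_le_Phi_singleton (X : Finset (Pt d)) (hc : c ∈ C) : Phi C X ≤ Phi {c} X := by
  rw [Phi_eq_sum_Phi_singleton, Phi_singleton_left]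
  exact sum_le_sum fun x _ => Phi_singleton_le hc

lemma Phi_anti (hC : C.Nonempty) (h : C ⊆ C') : Phi C' X ≤ Phi C X := by
  rw [Phi_eq_sum_Phi_singleton, Phi_eq_sum_Phi_singleton C]
  refine sum_le_sum fun x _ => ?_
  obtain ⟨c, hc, hcx⟩ := exists_Phi_singleton_eq hC x
  exact hcx ▸ Phi_singleton_le (h hc)

lemma sum_sub_ctr (S : Finset (Pt d)) : ∑ x ∈ S, (x - ctr S) = 0 := by
  rcases S.eq_empty_or_nonempty with rfl | hS
  · simp
  have hn : (#S : ℝ) ≠ 0 := by exact_mod_cast hS.card_pos.ne'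
  rw [sum_sub_distrib, sum_const, sub_eq_zero, ctr, ← Nat.cast_smul_eq_nsmul ℝ,
    smul_inv_smul₀ hn]

lemma Phi_singleton_left_eq_Delta1_add (S : Finset (Pt d)) (c : Pt d) :
    Phi {c} S = Delta1 S + #S * ‖c - ctr S‖ ^ 2 := by
  have hsq : ∀ x : Pt d, ‖x - c‖ ^ 2 =
      ‖x - ctr S‖ ^ 2 - 2 * inner ℝ (x - ctr S) (c - ctr S) + ‖c - ctr S‖ ^ 2 := fun x => by
    rw [← norm_sub_sq_real, sub_sub_sub_cancel_right]
  rw [Delta1, Phi_singleton_left, Phi_singleton_left, sum_congr rfl fun x _ => hsq x,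
    sum_add_distrib, sum_sub_distrib, ← mul_sum, ← sum_inner, sum_sub_ctr, inner_zero_left,
    sum_const, nsmul_eq_mul]
  ring

lemma Phi_le_Delta1_add_card_mul (hC : C.Nonempty) (S : Finset (Pt d)) :
    Phi C S ≤ Delta1 S + #S * Phi C {ctr S} := by
  obtain ⟨c, hc, hcS⟩ := exists_Phi_singleton_eq hC (ctr S)
  rw [hcS, norm_sub_rev, ← Phi_singleton_left_eq_Delta1_add]
  exact Phi_le_Phi_singleton S hc

lemma card_mul_norm_sub_ctr_sq_le {δ : ℝ} (h : Phi {c} S ≤ (1 + δ) * Delta1 S) :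
    #S * ‖c - ctr S‖ ^ 2 ≤ δ * Delta1 S := by
  rw [Phi_singleton_left_eq_Delta1_add] at h
  linarith

lemma DeltaK_le_Phi_of_card_le {m : ℕ} (X : Finset (Pt d)) (hC : C.Nonempty) (h : #C ≤ m) :
    DeltaK m X ≤ Phi C X := by
  have hbdd : BddBelow ((fun C => Phi C X) '' {C : Finset (Pt d) | #C = m}) :=
    ⟨0, by rintro _ ⟨C, -, rfl⟩; exact Phi_nonneg C X⟩
  obtain ⟨C', hCC', hC'⟩ | hnone :
      (∃ C' : Finset (Pt d), C ⊆ C' ∧ #C' = m) ∨ ∀ C' : Finset (Pt d), #C' ≠ m := by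
    rcases finite_or_infinite (Pt d) with _ | _
    · have := Fintype.ofFinite (Pt d)
      by_cases hm : m ≤ Fintype.card (Pt d)
      · exact .inl (exists_superset_card_eq h hm)
      · exact .inr fun C' hC' => hm (hC' ▸ card_le_univ C')
    · exact .inl (Infinite.exists_superset_card_eq C m h)
  · exact (csInf_le hbdd ⟨C', hC', rfl⟩).trans (Phi_anti hC hCC')
  · have hempty : {C : Finset (Pt d) | #C = m} = ∅ := Set.eq_empty_of_forall_notMem hnone
    rw [DeltaK, hempty, Set.image_empty, Real.sInf_empty]
    exact Phi_nonneg C X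

end Phi

lemma norm_sub_le_three_mul {E : Type*} [SeminormedAddCommGroup E] {x c μ ν : E}
    (hc : 4 * ‖c - μ‖ ≤ ‖ν - μ‖) (hx : ‖x - ν‖ ≤ ‖x - μ‖) : ‖ν - c‖ ≤ 3 * ‖x - c‖ := by
  have h1 := norm_sub_le_norm_sub_add_norm_sub x c μ
  have h2 := norm_sub_le_norm_sub_add_norm_sub ν x μ
  have h3 := norm_sub_le_norm_sub_add_norm_sub ν x c
  rw [norm_sub_rev ν x] at h2 h3
  linarith

section Markov

variable {d : ℕ} {C S : Finset (Pt d)} {a : ℝ}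

lemma div_two_mul_Phi_le_Phi_filter (ha : 0 ≤ a)
    (h : ∀ x ∈ S, a * Phi C S ≤ #S * Phi C {x}) :
    a / 2 * Phi C S ≤ Phi C (S.filter fun y => Phi C {y} ≤ 2 / #S * Phi C S) := by
  obtain hF | hF := (Phi_nonneg C S).eq_or_lt
  · rw [← hF, mul_zero]
    exact Phi_nonneg _ _
  have hm : (0 : ℝ) < #S := by
    rcases S.eq_empty_or_nonempty with rfl | hS
    · simp [Phi] at hF
    · exact_mod_cast hS.card_pos
  set F := Phi C S
  set Y := S.filter fun y => Phi C {y} ≤ 2 / #S * F with hYdef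
  set Z := S.filter fun y => ¬ Phi C {y} ≤ 2 / #S * F with hZdef
  have hsplit : Phi C Y + Phi C Z = F := by
    rw [hYdef, hZdef, Phi_eq_sum_Phi_singleton, Phi_eq_sum_Phi_singleton C,
      sum_filter_add_sum_filter_not, ← Phi_eq_sum_Phi_singleton]
  have hcard : (#Y : ℝ) + #Z = #S := by exact_mod_cast card_filter_add_card_filter_not _
  have hZ : #Z * (2 / #S * F) ≤ Phi C Z := by
    rw [Phi_eq_sum_Phi_singleton, ← nsmul_eq_mul]
    exact card_nsmul_le_sum _ _ _ fun z hz => (not_le.1 (mem_filter.1 hz).2).le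
  have hY : #Y * (a * F / #S) ≤ Phi C Y := by
    rw [Phi_eq_sum_Phi_singleton, ← nsmul_eq_mul]
    refine card_nsmul_le_sum _ _ _ fun y hy => ?_
    rw [div_le_iff₀ hm, mul_comm _ (#S : ℝ)]
    exact h y (mem_filter.1 hy).1
  -- Markov: each point outside `Y` costs more than `2F / m`, so there are at most `m / 2` of them.
  have hZcard : 2 * (#Z : ℝ) ≤ #S := by
    have hZF := hZ.trans (by linarith [Phi_nonneg C Y] : Phi C Z ≤ F)
    rw [show (#Z : ℝ) * (2 / #S * F) = 2 * #Z * F / #S by ring, div_le_iff₀ hm] at hZF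
    exact le_of_mul_le_mul_right (by linarith) hF
  calc a / 2 * F = #S / 2 * (a * F / #S) := by field_simp
    _ ≤ #Y * (a * F / #S) :=
        mul_le_mul_of_nonneg_right (by linarith) (div_nonneg (mul_nonneg ha hF.le) hm.le)
    _ ≤ Phi C Y := hY

lemma div_two_mul_Phi_singleton_le_of_mem_filter (ha : 0 ≤ a)
    (h : ∀ x ∈ S, a * Phi C S ≤ #S * Phi C {x}) {x y : Pt d}
    (hy : y ∈ S.filter fun y => Phi C {y} ≤ 2 / #S * Phi C S) (hx : x ∈ S) :
    a / 2 * Phi C {y} ≤ Phi C {x} := by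
  have hm : (0 : ℝ) < #S := by exact_mod_cast card_pos.2 ⟨x, hx⟩
  calc a / 2 * Phi C {y} ≤ a / 2 * (2 / #S * Phi C S) := by
        gcongr
        exact (mem_filter.1 hy).2
    _ = a * Phi C S / #S := by field_simp
    _ ≤ Phi C {x} := by
        rw [div_le_iff₀ hm, mul_comm _ (#S : ℝ)]
        exact h x hx

end Markov

section OptimalPartition

variable {d k : ℕ} {ε : ℝ} {X : Finset (Pt d)} {Xs : Fin k → Finset (Pt d)}

lemma IsOptPartition.Phi_eq_sum (hopt : IsOptPartition k X Xs) (C : Finset (Pt d)) :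
    Phi C X = ∑ l, Phi C (Xs l) := by
  rw [← hopt.2.2.1]
  exact sum_biUnion fun a _ b _ hab => hopt.2.1 a b hab

lemma IsOptPartition.Delta1_le_DeltaK (hopt : IsOptPartition k X Xs) (l : Fin k) :
    Delta1 (Xs l) ≤ DeltaK k X := by
  rw [← hopt.2.2.2]
  exact single_le_sum (f := fun l => Delta1 (Xs l)) (fun l _ => Delta1_nonneg _) (mem_univ l)

lemma IsOptPartition.DeltaK_le_of_Phi_le (hopt : IsOptPartition k X Xs) {C : Finset (Pt d)}
    {m : ℕ} (hC : C.Nonempty) (hcard : #C ≤ m) (δ e : ℝ) (j : Fin k)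
    (hj : Phi C (Xs j) ≤ (1 + δ) * Delta1 (Xs j) + e)
    (hl : ∀ l ≠ j, Phi C (Xs l) ≤ (1 + δ) * Delta1 (Xs l)) :
    DeltaK m X ≤ (1 + δ) * DeltaK k X + e :=
  calc DeltaK m X ≤ Phi C X := DeltaK_le_Phi_of_card_le X hC hcard
    _ = ∑ l, Phi C (Xs l) := hopt.Phi_eq_sum C
    _ ≤ ∑ l, ((1 + δ) * Delta1 (Xs l) + if l = j then e else 0) := by
        refine sum_le_sum fun l _ => ?_
        split_ifs with hlj
        · exact hlj ▸ hj
        · simpa using hl l hlj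
    _ = (1 + δ) * DeltaK k X + e := by
        rw [sum_add_distrib, ← mul_sum, hopt.2.2.2, sum_ite_eq' univ j, if_pos (mem_univ j)]

-- Moving the single point `x` from `X_j` to `X_r` cannot beat the optimal partition.
lemma IsOptPartition.norm_sub_ctr_sq_le (hopt : IsOptPartition k X Xs) {j : Fin k} {x : Pt d}
    (hx : x ∈ Xs j) (r : Fin k) : ‖x - ctr (Xs j)‖ ^ 2 ≤ ‖x - ctr (Xs r)‖ ^ 2 := by
  set C := univ.image fun l => ctr (Xs l)
  have hmem : ∀ l, ctr (Xs l) ∈ C := fun l => mem_image_of_mem _ (mem_univ l)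
  have hcard : #C ≤ k := card_image_le.trans (by simp)
  have hDeltaK := hopt.DeltaK_le_of_Phi_le ⟨_, hmem j⟩ hcard 0
    (‖x - ctr (Xs r)‖ ^ 2 - ‖x - ctr (Xs j)‖ ^ 2) j ?_ ?_
  · linarith
  · rw [add_zero, one_mul, Phi_eq_sum_Phi_singleton, Delta1, Phi_singleton_left,
      ← add_sum_erase _ _ hx, ← add_sum_erase _ _ hx]
    have hx' : Phi C {x} ≤ ‖x - ctr (Xs r)‖ ^ 2 := Phi_singleton_le (hmem r)
    have hrest := sum_le_sum fun y (_ : y ∈ (Xs j).erase x) =>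
      Phi_singleton_le (C := C) (x := y) (hmem j)
    linarith
  · intro l _
    rw [add_zero, one_mul]
    exact Phi_le_Phi_singleton _ (hmem l)

lemma KIrreducible.mul_DeltaK_le_card_mul_norm_sq (hirr : KIrreducible k ε X)
    (hopt : IsOptPartition k X Xs) {j r : Fin k} (hjr : j ≠ r) :
    ε * DeltaK k X ≤ #(Xs r) * ‖ctr (Xs j) - ctr (Xs r)‖ ^ 2 := by
  set C := (univ.erase r).image fun l => ctr (Xs l)
  have hmem : ∀ l ≠ r, ctr (Xs l) ∈ C := fun l hl =>
    mem_image_of_mem _ (mem_erase.2 ⟨hl, mem_univ l⟩)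
  have hcard : #C ≤ k - 1 := card_image_le.trans (by simp)
  have hDeltaK := hopt.DeltaK_le_of_Phi_le ⟨_, hmem j hjr⟩ hcard 0
    (#(Xs r) * ‖ctr (Xs j) - ctr (Xs r)‖ ^ 2) r ?_ ?_
  · unfold KIrreducible at hirr
    linarith
  · rw [add_zero, one_mul, ← Phi_singleton_left_eq_Delta1_add]
    exact Phi_le_Phi_singleton _ (hmem j hjr)
  · intro l hl
    rw [add_zero, one_mul]
    exact Phi_le_Phi_singleton _ (hmem l hl)

lemma KIrreducible.four_mul_norm_sub_ctr_le (hirr : KIrreducible k ε X)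
    (hopt : IsOptPartition k X Xs) (hε : 0 ≤ ε) {c : Pt d} {j r : Fin k}
    (hc : Phi {c} (Xs r) ≤ (1 + ε / 16) * Delta1 (Xs r)) (hjr : j ≠ r) :
    4 * ‖c - ctr (Xs r)‖ ≤ ‖ctr (Xs j) - ctr (Xs r)‖ := by
  have hm : (0 : ℝ) < #(Xs r) := by exact_mod_cast (hopt.1 r).card_pos
  have hgood := card_mul_norm_sub_ctr_sq_le hc
  have hmerge := hirr.mul_DeltaK_le_card_mul_norm_sq hopt hjr
  have hΔ := mul_le_mul_of_nonneg_left (hopt.Delta1_le_DeltaK r) hε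
  refine (sq_le_sq₀ (by positivity) (norm_nonneg _)).1 (le_of_mul_le_mul_left ?_ hm)
  nlinarith

lemma KIrreducible.mul_DeltaK_le_card_mul_Phi_ctr (hirr : KIrreducible k ε X)
    (hopt : IsOptPartition k X Xs) {T : Finset (Fin k)} {c : Fin k → Pt d} {δ : ℝ}
    (hδ : 0 ≤ δ) (hT : T.Nonempty)
    (hgood : ∀ l ∈ T, Phi {c l} (Xs l) ≤ (1 + δ) * Delta1 (Xs l)) {j : Fin k} (hj : j ∉ T) :
    (ε - δ) * DeltaK k X ≤ #(Xs j) * Phi (T.image c) {ctr (Xs j)} := by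
  have hcard : #(T.image c ∪ (Tᶜ.erase j).image fun l => ctr (Xs l)) ≤ k - 1 := by
    have h1 := card_union_le (T.image c) ((Tᶜ.erase j).image fun l => ctr (Xs l))
    have h2 : #(T.image c) ≤ #T := card_image_le
    have h3 : #((Tᶜ.erase j).image fun l => ctr (Xs l)) ≤ #(Tᶜ.erase j) := card_image_le
    have h4 : #T < k := by simpa using card_lt_univ_of_notMem hj
    rw [card_erase_of_mem (mem_compl.2 hj), card_compl, Fintype.card_fin] at h3
    omega
  set C := T.image c ∪ (Tᶜ.erase j).image fun l => ctr (Xs l)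
  have hDeltaK := hopt.DeltaK_le_of_Phi_le ((hT.image c).mono subset_union_left) hcard δ
    (#(Xs j) * Phi (T.image c) {ctr (Xs j)}) j ?_ ?_
  · unfold KIrreducible at hirr
    linarith
  · calc Phi C (Xs j) ≤ Phi (T.image c) (Xs j) := Phi_anti (hT.image c) subset_union_left
      _ ≤ Delta1 (Xs j) + #(Xs j) * Phi (T.image c) {ctr (Xs j)} :=
          Phi_le_Delta1_add_card_mul (hT.image c) _
      _ ≤ _ := by nlinarith [mul_nonneg hδ (Delta1_nonneg (Xs j))]
  · intro l hl
    by_cases hlT : l ∈ T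
    · exact (Phi_le_Phi_singleton _ (mem_union_left _ (mem_image_of_mem c hlT))).trans
        (hgood l hlT)
    · refine (Phi_le_Phi_singleton _ (mem_union_right _ (mem_image_of_mem _
        (mem_erase.2 ⟨hl, mem_compl.2 hlT⟩)))).trans ?_
      exact le_mul_of_one_le_left (Delta1_nonneg _) (by linarith)

lemma KIrreducible.mul_Phi_le_card_mul_Phi_singleton (hirr : KIrreducible k ε X)
    (hopt : IsOptPartition k X Xs) (hε0 : 0 ≤ ε) (hε : ε ≤ 1 / 2) {T : Finset (Fin k)}
    {c : Fin k → Pt d} (hT : T.Nonempty)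
    (hgood : ∀ r ∈ T, Phi {c r} (Xs r) ≤ (1 + ε / 16) * Delta1 (Xs r)) {j : Fin k}
    (hj : j ∉ T) {x : Pt d} (hx : x ∈ Xs j) :
    ε / 64 * Phi (T.image c) (Xs j) ≤ #(Xs j) * Phi (T.image c) {x} := by
  set C := T.image c
  have hC : C.Nonempty := hT.image c
  obtain ⟨_, hc, hxc⟩ := exists_Phi_singleton_eq hC x
  obtain ⟨r, hr, rfl⟩ := mem_image.1 hc
  have hjr : j ≠ r := fun h => hj (h ▸ hr)
  have hnear : ‖ctr (Xs j) - c r‖ ≤ 3 * ‖x - c r‖ :=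
    norm_sub_le_three_mul (hirr.four_mul_norm_sub_ctr_le hopt hε0 (hgood r hr) hjr)
      ((sq_le_sq₀ (norm_nonneg _) (norm_nonneg _)).1 (hopt.norm_sub_ctr_sq_le hx r))
  set P := (#(Xs j) : ℝ) * ‖x - c r‖ ^ 2
  have hP : 0 ≤ P := by positivity
  have hctr : #(Xs j) * Phi C {ctr (Xs j)} ≤ 9 * P := by
    have hμ : Phi C {ctr (Xs j)} ≤ 9 * ‖x - c r‖ ^ 2 :=
      (Phi_singleton_le hc).trans (by nlinarith [norm_nonneg (ctr (Xs j) - c r)])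
    have hm : (0 : ℝ) ≤ #(Xs j) := by positivity
    nlinarith
  have hA := hirr.mul_DeltaK_le_card_mul_Phi_ctr hopt (by positivity : 0 ≤ ε / 16) hT hgood hj
  have hup : Phi C (Xs j) ≤ DeltaK k X + 9 * P := by
    linarith [Phi_le_Delta1_add_card_mul hC (Xs j), hopt.Delta1_le_DeltaK j]
  rw [hxc]
  calc ε / 64 * Phi C (Xs j) ≤ ε / 64 * (DeltaK k X + 9 * P) := by gcongr
    _ ≤ P := by nlinarith [mul_le_mul_of_nonneg_right hε hP]

end OptimalPartition

theorem stmt_11_general {d k : ℕ} (ε : ℝ) (hε0 : 0 < ε) (hε : ε ≤ 1 / 2)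
    (X : Finset (Pt d)) (hirr : KIrreducible k ε X)
    (Xs : Fin k → Finset (Pt d)) (hopt : IsOptPartition k X Xs)
    (i : ℕ)
    (c : Fin k → Pt d) (Ci : Finset (Pt d)) (hinv : InvariantP ε X Xs i c Ci) :
    ∀ j : Fin k, i ≤ j.val →
      (ε / 128) * Phi Ci (Xs j) ≤
          Phi Ci ((Xs j).filter
            (fun y => Phi Ci {y} ≤ (2 / ((Xs j).card : ℝ)) * Phi Ci (Xs j))) ∧
      ∀ y ∈ (Xs j).filter
          (fun y => Phi Ci {y} ≤ (2 / ((Xs j).card : ℝ)) * Phi Ci (Xs j)),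
        ∀ x ∈ Xs j, (ε / 128) * Phi Ci {y} ≤ Phi Ci {x} := by
  obtain ⟨rfl, hgood, hpos⟩ := hinv
  intro j hj
  have hT : (univ.filter fun r : Fin k => r.val < i).Nonempty :=
    image_nonempty.1 (nonempty_of_Phi_pos hpos)
  have hjT : j ∉ univ.filter fun r : Fin k => r.val < i := by simp [hj]
  have hbound := fun x (hx : x ∈ Xs j) => hirr.mul_Phi_le_card_mul_Phi_singleton hopt hε0.le hε
    hT (fun r hr => hgood r (mem_filter.1 hr).2) hjT hx
  have ha : 0 ≤ ε / 64 := by positivity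
  rw [show ε / 128 = ε / 64 / 2 by ring]
  exact ⟨div_two_mul_Phi_le_Phi_filter ha hbound,
    fun y hy x hx => div_two_mul_Phi_singleton_le_of_mem_filter ha hbound hy hx⟩

/-- Under the invariant `P(i)` (clusters reindexed so the covered clusters
are `X₁, …, X_i`), for every `j ∈ {i+1, …, k}`, with
`Y_j = {y ∈ X_j : Φ(C_i, {y}) ≤ (2/m_j)·Φ(C_i, X_j)}`:
(1) `Φ(C_i, Y_j) ≥ (ε/128)·Φ(C_i, X_j)`, and
(2) for every `y ∈ Y_j` and `x ∈ X_j`, `(ε/128)·Φ(C_i, {y}) ≤ Φ(C_i, {x})`. -/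
theorem stmt_11 {d k : ℕ} (ε : ℝ) (hε0 : 0 < ε) (hε : ε ≤ 1 / 2)
    (X : Finset (Pt d)) (hirr : KIrreducible k ε X)
    (Xs : Fin k → Finset (Pt d)) (hopt : IsOptPartition k X Xs)
    (i : ℕ) (hi : 1 ≤ i) (hik : i < k)
    (c : Fin k → Pt d) (Ci : Finset (Pt d)) (hinv : InvariantP ε X Xs i c Ci) :
    ∀ j : Fin k, i ≤ j.val →
      (ε / 128) * Phi Ci (Xs j) ≤
          Phi Ci ((Xs j).filter
            (fun y => Phi Ci {y} ≤ (2 / ((Xs j).card : ℝ)) * Phi Ci (Xs j))) ∧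
      ∀ y ∈ (Xs j).filter
          (fun y => Phi Ci {y} ≤ (2 / ((Xs j).card : ℝ)) * Phi Ci (Xs j)),
        ∀ x ∈ Xs j, (ε / 128) * Phi Ci {y} ≤ Phi Ci {x} :=
  stmt_11_general ε hε0 hε X hirr Xs hopt i c Ci hinv
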